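/- arXiv:1406.4363 — 2 statements merged into one kernel-verified Lean document; each statement's English description precedes it below -/
import Mathlib

section
/- Suppose a function f(w, α) : ℝ^d × ℝ^m → ℝ is convex in w and concave in α, and there exist constants C > 0 and D > 0 such that for all feasible pairs (w,α),(w',α') we have ‖w−w'‖² + ‖α−α'‖² ≤ D, and for all t = 1,…,T and all feasible (w,α): ‖w^{t+1}−w‖² + ‖α^{t+1}−α‖² ≤ ‖w^t−w‖² + ‖α^t−α‖² − 2η_t(f(w^t,α) − f(w,α^t)) + Cη_t². Then with step sizes η_t = √(D/(2Ct)) the averaged iterates (w̃^T, α̃^T) = ((1/T)Σ_t w^t, (1/T)Σ_t α^t) satisfy max_{α'} f(w̃^T, α') − min_{w'} f(w', α̃^T) ≤ √(2DC/T). -/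
/-!
For fixed comparison points `w ∈ W`, `a ∈ A`, the step inequality divided by `2 η_t` bounds
`g_t = f(w^t, a) - f(w, α^t)` by `(r_t - r_{t+1}) / (2 η_t) + C η_t / 2`, where `r_t` is the
squared distance of the iterate to `(w, a)`. Since `1 / η_t` grows and `0 ≤ r_t ≤ D`, summation
by parts bounds the first part of the sum by `D / (2 η_T)`, and `∑ 1/√t ≤ 2√T` bounds the second;
with `η_t = E / √t` this gives `∑ g_t ≤ (D / (2E) + C E) √T = √(2DCT)` for the chosen `E`.
Jensen's inequality in each variable turns this into the bound on the gap of the averaged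
iterates, uniformly in `(w, a)`.
-/

open Finset

theorem sum_Icc_inv_sqrt_le (T : ℕ) : ∑ t ∈ Icc 1 T, (√(t : ℝ))⁻¹ ≤ 2 * √(T : ℝ) := by
  induction T with
  | zero => simp
  | succ n ih =>
    rw [sum_Icc_succ_top (Nat.le_add_left 1 n)]
    have hs : (0 : ℝ) < √((n + 1 : ℕ) : ℝ) := Real.sqrt_pos.mpr (by positivity)
    -- `1 = (√(n+1) - √n)(√(n+1) + √n) ≤ 2√(n+1)(√(n+1) - √n)`
    have hstep : (√((n + 1 : ℕ) : ℝ))⁻¹ ≤ 2 * (√((n + 1 : ℕ) : ℝ) - √(n : ℝ)) := by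
      have hmono : √(n : ℝ) ≤ √((n + 1 : ℕ) : ℝ) := Real.sqrt_le_sqrt (by simp)
      have hsq : √((n + 1 : ℕ) : ℝ) ^ 2 = √(n : ℝ) ^ 2 + 1 := by
        rw [Real.sq_sqrt (by positivity), Real.sq_sqrt (by positivity)]; push_cast; ring
      rw [inv_le_iff_one_le_mul₀ hs]
      nlinarith
    linarith

theorem sum_Icc_sub_mul_le {r b : ℕ → ℝ} {D : ℝ} (hrD : ∀ t, r t ≤ D) (hb : Monotone b)
    (hb0 : 0 ≤ b 0) (T : ℕ) :
    ∑ t ∈ Icc 1 T, (r t - r (t + 1)) * b t ≤ (D - r (T + 1)) * b T := by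
  induction T with
  | zero => simpa using mul_nonneg (sub_nonneg.mpr (hrD 1)) hb0
  | succ n ih =>
    rw [sum_Icc_succ_top (Nat.le_add_left 1 n)]
    have := mul_nonneg (sub_nonneg.mpr (hrD (n + 1))) (sub_nonneg.mpr (hb n.le_succ))
    nlinarith

theorem le_of_descent_step {r₀ r₁ g C E s : ℝ} (hE : 0 < E) (hs : 0 < s)
    (h : r₁ ≤ r₀ - 2 * (E / s) * g + C * (E / s) ^ 2) :
    g ≤ (r₀ - r₁) * (s / (2 * E)) + C * E / 2 * s⁻¹ := by
  have := mul_le_mul_of_nonneg_right h (by positivity : (0 : ℝ) ≤ s / (2 * E))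
  field_simp at this ⊢
  nlinarith

theorem sum_le_of_descent {r g : ℕ → ℝ} {C D E : ℝ} {T : ℕ} (hC : 0 ≤ C) (hE : 0 < E)
    (hr0 : ∀ t, 0 ≤ r t) (hrD : ∀ t, r t ≤ D)
    (hstep : ∀ t ∈ Icc 1 T,
      r (t + 1) ≤ r t - 2 * (E / √(t : ℝ)) * g t + C * (E / √(t : ℝ)) ^ 2) :
    ∑ t ∈ Icc 1 T, g t ≤ (D / (2 * E) + C * E) * √(T : ℝ) := by
  have hper : ∀ t ∈ Icc 1 T,
      g t ≤ (r t - r (t + 1)) * (√(t : ℝ) / (2 * E)) + C * E / 2 * (√(t : ℝ))⁻¹ :=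
    fun t ht => le_of_descent_step hE
      (Real.sqrt_pos.mpr (by exact_mod_cast (mem_Icc.mp ht).1)) (hstep t ht)
  have hmono : Monotone fun t : ℕ => √(t : ℝ) / (2 * E) := fun s t hst => by
    dsimp only; gcongr
  have htel := sum_Icc_sub_mul_le hrD hmono (by simp) T
  have hsqrt := sum_Icc_inv_sqrt_le T
  calc ∑ t ∈ Icc 1 T, g t
      ≤ ∑ t ∈ Icc 1 T, (r t - r (t + 1)) * (√(t : ℝ) / (2 * E))
        + C * E / 2 * ∑ t ∈ Icc 1 T, (√(t : ℝ))⁻¹ := by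
        rw [mul_sum, ← sum_add_distrib]; exact sum_le_sum hper
    _ ≤ D * (√(T : ℝ) / (2 * E)) + C * E / 2 * (2 * √(T : ℝ)) := by
        gcongr
        nlinarith [hr0 (T + 1), show 0 ≤ √(T : ℝ) / (2 * E) by positivity]
    _ = (D / (2 * E) + C * E) * √(T : ℝ) := by ring

theorem ConvexOn.map_card_inv_smul_sum_le {E : Type*} [AddCommGroup E] [Module ℝ E]
    {s : Set E} {φ : E → ℝ} (hφ : ConvexOn ℝ s φ) {ι : Type*} {u : Finset ι} (hu : u.Nonempty)
    {x : ι → E} (hx : ∀ i ∈ u, x i ∈ s) :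
    φ ((#u : ℝ)⁻¹ • ∑ i ∈ u, x i) ≤ (#u : ℝ)⁻¹ * ∑ i ∈ u, φ (x i) := by
  have hcard : (0 : ℝ) < #u := by exact_mod_cast hu.card_pos
  simpa [smul_sum, mul_sum] using
    hφ.map_sum_le (w := fun _ => (#u : ℝ)⁻¹) (fun _ _ => by positivity) (by simp [hcard.ne']) hx

theorem ConcaveOn.card_inv_mul_sum_le_map {E : Type*} [AddCommGroup E] [Module ℝ E]
    {s : Set E} {φ : E → ℝ} (hφ : ConcaveOn ℝ s φ) {ι : Type*} {u : Finset ι} (hu : u.Nonempty)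
    {x : ι → E} (hx : ∀ i ∈ u, x i ∈ s) :
    (#u : ℝ)⁻¹ * ∑ i ∈ u, φ (x i) ≤ φ ((#u : ℝ)⁻¹ • ∑ i ∈ u, x i) := by
  have hcard : (0 : ℝ) < #u := by exact_mod_cast hu.card_pos
  simpa [smul_sum, mul_sum] using
    hφ.le_map_sum (w := fun _ => (#u : ℝ)⁻¹) (fun _ _ => by positivity) (by simp [hcard.ne']) hx

theorem sSup_image_sub_sInf_image_le {α β : Type*} {φ : α → ℝ} {ψ : β → ℝ} {s : Set α}
    {t : Set β} (hs : s.Nonempty) (ht : t.Nonempty) {ε : ℝ}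
    (h : ∀ a ∈ s, ∀ b ∈ t, φ a - ψ b ≤ ε) : sSup (φ '' s) - sInf (ψ '' t) ≤ ε := by
  suffices sSup (φ '' s) ≤ sInf (ψ '' t) + ε by linarith
  refine csSup_le (hs.image φ) ?_
  rintro _ ⟨a, ha, rfl⟩
  suffices φ a - ε ≤ sInf (ψ '' t) by linarith
  refine le_csInf (ht.image ψ) ?_
  rintro _ ⟨b, hb, rfl⟩
  linarith [h a ha b hb]

theorem div_add_mul_sqrt_div_eq_sqrt {C D : ℝ} (hC : 0 < C) (hD : 0 < D) :
    D / (2 * √(D / (2 * C))) + C * √(D / (2 * C)) = √(2 * D * C) := by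
  set E := √(D / (2 * C))
  have hE : 0 < E := Real.sqrt_pos.mpr (by positivity)
  have hE2 : E ^ 2 = D / (2 * C) := Real.sq_sqrt (by positivity)
  have hDE : D = 2 * C * E ^ 2 := by rw [hE2]; field_simp
  have hsum : D / (2 * E) + C * E = 2 * C * E := by rw [hDE]; field_simp; ring
  rw [hsum, ← Real.sqrt_sq (by positivity : 0 ≤ 2 * C * E), hDE]
  congr 1
  ring

theorem stmt_4_general (d m T : ℕ) (hT : 1 ≤ T)
    (f : EuclideanSpace ℝ (Fin d) → EuclideanSpace ℝ (Fin m) → ℝ)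
    (W : Set (EuclideanSpace ℝ (Fin d))) (A : Set (EuclideanSpace ℝ (Fin m)))
    (hconv : ∀ a ∈ A, ConvexOn ℝ W (fun w => f w a))
    (hconc : ∀ w ∈ W, ConcaveOn ℝ A (fun a => f w a))
    (C D : ℝ) (hC : 0 < C) (hD : 0 < D)
    (wseq : ℕ → EuclideanSpace ℝ (Fin d)) (aseq : ℕ → EuclideanSpace ℝ (Fin m))
    (hmem : ∀ t, wseq t ∈ W ∧ aseq t ∈ A)
    (hdiam : ∀ w ∈ W, ∀ w' ∈ W, ∀ a ∈ A, ∀ a' ∈ A,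
      ‖w - w'‖ ^ 2 + ‖a - a'‖ ^ 2 ≤ D)
    (η : ℕ → ℝ) (hη : ∀ t : ℕ, η t = Real.sqrt (D / (2 * C * t)))
    (hstep : ∀ t : ℕ, 1 ≤ t → t ≤ T → ∀ w ∈ W, ∀ a ∈ A,
      ‖wseq (t + 1) - w‖ ^ 2 + ‖aseq (t + 1) - a‖ ^ 2
        ≤ ‖wseq t - w‖ ^ 2 + ‖aseq t - a‖ ^ 2
          - 2 * η t * (f (wseq t) a - f w (aseq t)) + C * η t ^ 2) :
    sSup ((fun a => f ((T : ℝ)⁻¹ • ∑ t ∈ Finset.Icc 1 T, wseq t) a) '' A)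
      - sInf ((fun w => f w ((T : ℝ)⁻¹ • ∑ t ∈ Finset.Icc 1 T, aseq t)) '' W)
      ≤ Real.sqrt (2 * D * C / T) := by
  have hTpos : (0 : ℝ) < T := by exact_mod_cast hT
  have hcard : (#(Icc 1 T) : ℝ) = T := by simp
  have hne : (Icc 1 T).Nonempty := nonempty_Icc.mpr hT
  have hηE : ∀ t : ℕ, η t = √(D / (2 * C)) / √(t : ℝ) := fun t => by
    rw [hη, ← div_div, Real.sqrt_div' _ (Nat.cast_nonneg t)]
  refine sSup_image_sub_sInf_image_le ⟨_, (hmem 0).2⟩ ⟨_, (hmem 0).1⟩ fun a ha w hw => ?_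
  have hsum := sum_le_of_descent (g := fun t => f (wseq t) a - f w (aseq t))
    (E := √(D / (2 * C))) hC.le
    (Real.sqrt_pos.mpr (by positivity)) (fun t => by positivity)
    (fun t => hdiam _ (hmem t).1 w hw _ (hmem t).2 a ha)
    (fun t ht => by
      simpa only [← hηE] using hstep t (mem_Icc.mp ht).1 (mem_Icc.mp ht).2 w hw a ha)
  rw [div_add_mul_sqrt_div_eq_sqrt hC hD] at hsum
  have hjensen_w := (hconv a ha).map_card_inv_smul_sum_le hne fun t _ => (hmem t).1
  have hjensen_a := (hconc w hw).card_inv_mul_sum_le_map hne fun t _ => (hmem t).2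
  rw [hcard] at hjensen_w hjensen_a
  calc f ((T : ℝ)⁻¹ • ∑ t ∈ Icc 1 T, wseq t) a - f w ((T : ℝ)⁻¹ • ∑ t ∈ Icc 1 T, aseq t)
      ≤ (T : ℝ)⁻¹ * ∑ t ∈ Icc 1 T, (f (wseq t) a - f w (aseq t)) := by
        rw [sum_sub_distrib]; linarith
    _ ≤ (T : ℝ)⁻¹ * (√(2 * D * C) * √(T : ℝ)) := by gcongr
    _ = √(2 * D * C / T) := by
        have hsqT : √(T : ℝ) ^ 2 = T := Real.sq_sqrt hTpos.le
        have : 0 < √(T : ℝ) := Real.sqrt_pos.mpr hTpos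
        rw [Real.sqrt_div' _ hTpos.le]
        field_simp
        linarith

/-- Convergence lemma: under the boundedness and descent-inequality assumptions,
with step sizes `η_t = √(D/(2Ct))`, the duality gap of the averaged iterates
after `T` epochs is at most `√(2DC/T)`. -/
theorem stmt_4 (d m T : ℕ) (hT : 1 ≤ T)
    (f : EuclideanSpace ℝ (Fin d) → EuclideanSpace ℝ (Fin m) → ℝ)
    (W : Set (EuclideanSpace ℝ (Fin d))) (A : Set (EuclideanSpace ℝ (Fin m)))
    (hWc : Convex ℝ W) (hAc : Convex ℝ A)
    (hconv : ∀ a ∈ A, ConvexOn ℝ W (fun w => f w a))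
    (hconc : ∀ w ∈ W, ConcaveOn ℝ A (fun a => f w a))
    (C D : ℝ) (hC : 0 < C) (hD : 0 < D)
    (wseq : ℕ → EuclideanSpace ℝ (Fin d)) (aseq : ℕ → EuclideanSpace ℝ (Fin m))
    (hmem : ∀ t, wseq t ∈ W ∧ aseq t ∈ A)
    (hdiam : ∀ w ∈ W, ∀ w' ∈ W, ∀ a ∈ A, ∀ a' ∈ A,
      ‖w - w'‖ ^ 2 + ‖a - a'‖ ^ 2 ≤ D)
    (η : ℕ → ℝ) (hη : ∀ t : ℕ, η t = Real.sqrt (D / (2 * C * t)))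
    (hstep : ∀ t : ℕ, 1 ≤ t → t ≤ T → ∀ w ∈ W, ∀ a ∈ A,
      ‖wseq (t + 1) - w‖ ^ 2 + ‖aseq (t + 1) - a‖ ^ 2
        ≤ ‖wseq t - w‖ ^ 2 + ‖aseq t - a‖ ^ 2
          - 2 * η t * (f (wseq t) a - f w (aseq t)) + C * η t ^ 2) :
    sSup ((fun a => f ((T : ℝ)⁻¹ • ∑ t ∈ Finset.Icc 1 T, wseq t) a) '' A)
      - sInf ((fun w => f w ((T : ℝ)⁻¹ • ∑ t ∈ Finset.Icc 1 T, aseq t)) '' W)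
      ≤ Real.sqrt (2 * D * C / T) :=
  stmt_4_general d m T hT f W A hconv hconc C D hC hD wseq aseq hmem hdiam η hη hstep
end

section
/- Consider the recursion w_k = (1 − (λ/n)η) w_{k−1} + (η/m) α_{k−1} x_k applied n times starting from w_0 = w, where |α_{k−1}| ≤ c for all k and 0 < λη < 1. Then |w_n − w| ≤ (1 − (1 − (λ/n)η)^n)|w| + cη v, where v = (1/m) Σ_{k=1}^n |x_k|. -/
/-!
Unrolling the recursion `w k = r * w (k - 1) + b k` with `0 ≤ r ≤ 1` gives
`w n = r ^ n * w 0 + ∑ r ^ (n - k) * b k`, so `w n` stays within `∑ |b k|` of `r ^ n * w 0`,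
which itself is at distance `(1 - r ^ n) * |w 0|` from `w 0`. Here `r = 1 - λη/n ∈ [0, 1]` and
`|b k| ≤ c (η/m) |x k|`.
-/

open Finset

section LinearRecursion

variable {r : ℝ} {w b : ℕ → ℝ} {n : ℕ}

theorem abs_sub_pow_mul_le_sum_abs_of_rec (hr0 : 0 ≤ r) (hr1 : r ≤ 1)
    (hrec : ∀ k ∈ Icc 1 n, w k = r * w (k - 1) + b k) :
    |w n - r ^ n * w 0| ≤ ∑ k ∈ Icc 1 n, |b k| := by
  induction n with
  | zero => simp
  | succ n ih =>
    have hstep : w (n + 1) = r * w n + b (n + 1) := by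
      simpa using hrec (n + 1) (mem_Icc.mpr ⟨Nat.le_add_left 1 n, le_rfl⟩)
    have ih := ih fun k hk ↦ hrec k (Icc_subset_Icc_right n.le_succ hk)
    calc |w (n + 1) - r ^ (n + 1) * w 0|
        = |r * (w n - r ^ n * w 0) + b (n + 1)| := by rw [hstep]; ring_nf
      _ ≤ r * |w n - r ^ n * w 0| + |b (n + 1)| := by
          grw [abs_add_le, abs_mul, abs_of_nonneg hr0]
      _ ≤ |w n - r ^ n * w 0| + |b (n + 1)| := by
          grw [mul_le_of_le_one_left (abs_nonneg _) hr1]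
      _ ≤ ∑ k ∈ Icc 1 (n + 1), |b k| := by
          rw [sum_Icc_succ_top (Nat.le_add_left 1 n)]; grw [ih]

theorem abs_sub_le_of_rec (hr0 : 0 ≤ r) (hr1 : r ≤ 1)
    (hrec : ∀ k ∈ Icc 1 n, w k = r * w (k - 1) + b k) :
    |w n - w 0| ≤ (1 - r ^ n) * |w 0| + ∑ k ∈ Icc 1 n, |b k| := by
  have hdecay : |r ^ n * w 0 - w 0| = (1 - r ^ n) * |w 0| := by
    rw [← abs_of_nonneg (sub_nonneg.mpr (pow_le_one₀ hr0 hr1)), ← abs_mul, abs_sub_comm]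
    ring_nf
  calc |w n - w 0| ≤ |w n - r ^ n * w 0| + |r ^ n * w 0 - w 0| := abs_sub_le _ _ _
    _ ≤ (1 - r ^ n) * |w 0| + ∑ k ∈ Icc 1 n, |b k| := by
      rw [hdecay, add_comm]
      grw [abs_sub_pow_mul_le_sum_abs_of_rec hr0 hr1 hrec]

end LinearRecursion

/-- Bound on the drift of a coordinate of `w` under `n` steps of the
incremental gradient recursion with bounded `α` values. -/
theorem stmt_9 (n : ℕ) (hn : 1 ≤ n) (m lam eta c : ℝ)
    (hm : 0 < m) (hlam : 0 < lam) (heta : 0 < eta) (hle : lam * eta < 1)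
    (w : ℕ → ℝ) (a : ℕ → ℝ) (x : ℕ → ℝ)
    (ha : ∀ k, |a k| ≤ c)
    (hrec : ∀ k ∈ Finset.Icc 1 n,
      w k = (1 - lam * eta / n) * w (k - 1) + (eta / m) * a (k - 1) * x k) :
    |w n - w 0|
      ≤ (1 - (1 - lam * eta / n) ^ n) * |w 0|
        + c * eta * ((1 / m) * ∑ k ∈ Finset.Icc 1 n, |x k|) := by
  have hstep_le : lam * eta / n ≤ lam * eta := div_le_self (by positivity) (by exact_mod_cast hn)
  have hstep_nonneg : 0 ≤ lam * eta / n := by positivity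
  have hforce (k : ℕ) : |eta / m * a (k - 1) * x k| ≤ c * (eta / m) * |x k| := by
    rw [abs_mul, abs_mul, abs_of_pos (div_pos heta hm)]
    rw [mul_comm c]
    gcongr
    exact ha (k - 1)
  calc |w n - w 0|
      ≤ (1 - (1 - lam * eta / n) ^ n) * |w 0| + ∑ k ∈ Icc 1 n, |eta / m * a (k - 1) * x k| :=
        abs_sub_le_of_rec (by linarith) (by linarith) hrec
    _ ≤ (1 - (1 - lam * eta / n) ^ n) * |w 0| + ∑ k ∈ Icc 1 n, c * (eta / m) * |x k| := by
        grw [sum_le_sum fun k _ ↦ hforce k]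
    _ = (1 - (1 - lam * eta / n) ^ n) * |w 0| + c * eta * ((1 / m) * ∑ k ∈ Icc 1 n, |x k|) := by
        rw [← mul_sum]; ring
end
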